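/- Every element x of the abelian group L = ⟨x_1,…,x_n,c⟩ / ⟨p_i x_i − c | 1 ≤ i ≤ n⟩ (with integers p_i ≥ 2) can be written uniquely in the normal form x = Σ_{i=1}^n λ_i x_i + λ c with integers 0 ≤ λ_i < p_i and λ ∈ ℤ. -/
import Mathlib

/-- The subgroup of relations `p i • x_i - c` in the free abelian group on `x_1,…,x_n,c`. -/
def Lrel (n : ℕ) (p : Fin n → ℤ) : AddSubgroup ((Fin n → ℤ) × ℤ) :=
  AddSubgroup.closure {v | ∃ i : Fin n, v = (Pi.single i (p i), -1)}

/-- The Geigle-Lenzing group `L = ⟨x_1,…,x_n,c⟩ / ⟨p_i x_i - c⟩`. -/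
abbrev Lgrp (n : ℕ) (p : Fin n → ℤ) : Type :=
  ((Fin n → ℤ) × ℤ) ⧸ Lrel n p

/-- The generator `x_i` of `L`. -/
def Lx (n : ℕ) (p : Fin n → ℤ) (i : Fin n) : Lgrp n p :=
  QuotientAddGroup.mk (Pi.single i 1, 0)

/-- The canonical element `c` of `L`. -/
def Lc (n : ℕ) (p : Fin n → ℤ) : Lgrp n p :=
  QuotientAddGroup.mk (0, 1)

/-- The positive cone `L_+`, the submonoid generated by `x_1,…,x_n,c`. -/
def Lplus (n : ℕ) (p : Fin n → ℤ) : AddSubmonoid (Lgrp n p) :=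
  AddSubmonoid.closure (Set.range (Lx n p) ∪ {Lc n p})

lemma mem_Lrel (n : ℕ) (p : Fin n → ℤ) (v : (Fin n → ℤ) × ℤ) :
    v ∈ Lrel n p ↔ ∃ k : Fin n → ℤ, v = (fun i => k i * p i, -∑ i, k i) := by
  constructor
  · intro hv
    refine AddSubgroup.closure_induction ?_ ?_ ?_ ?_ hv
    · rintro w ⟨i, rfl⟩
      refine ⟨Pi.single i 1, Prod.ext (funext fun j => ?_) ?_⟩
      · by_cases h : j = i <;> simp [Pi.single_apply, h]
      · simp
    · exact ⟨0, Prod.ext (funext fun j => by simp) (by simp)⟩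
    · rintro u w _ _ ⟨k, rfl⟩ ⟨l, rfl⟩
      refine ⟨k + l, Prod.ext (funext fun j => ?_) ?_⟩
      · show k j * p j + l j * p j = (k j + l j) * p j; ring
      · show -∑ i, k i + -∑ i, l i = -∑ i, (k i + l i)
        rw [Finset.sum_add_distrib]; ring
    · rintro w _ ⟨k, rfl⟩
      refine ⟨-k, Prod.ext (funext fun j => ?_) ?_⟩
      · show -(k j * p j) = (-k j) * p j; ring
      · show -(-∑ i, k i) = -∑ i, (-k i); simp
  · rintro ⟨k, rfl⟩
    have : ((fun i => k i * p i, -∑ i, k i) : (Fin n → ℤ) × ℤ)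
        = ∑ i, k i • ((Pi.single i (p i), -1) : (Fin n → ℤ) × ℤ) := by
      refine Prod.ext (funext fun j => ?_) ?_
      · simp [Prod.fst_sum, Finset.sum_apply, Pi.single_apply, Finset.sum_ite_eq',
          mul_ite]
      · simp [Prod.snd_sum]
    rw [this]
    refine AddSubgroup.sum_mem _ fun i _ => AddSubgroup.zsmul_mem _ ?_ _
    exact AddSubgroup.subset_closure ⟨i, rfl⟩

lemma mk_eq_sum (n : ℕ) (p : Fin n → ℤ) (lam : (Fin n → ℤ) × ℤ) :
    (QuotientAddGroup.mk lam : Lgrp n p)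
      = (∑ i, lam.1 i • Lx n p i) + lam.2 • Lc n p := by
  have : lam = (∑ i, lam.1 i • ((Pi.single i 1, 0) : (Fin n → ℤ) × ℤ))
      + lam.2 • ((0, 1) : (Fin n → ℤ) × ℤ) := by
    refine Prod.ext (funext fun j => ?_) ?_
    · simp [Prod.fst_sum, Finset.sum_apply, Pi.single_apply, Finset.sum_ite_eq', mul_ite]
    · simp [Prod.snd_sum]
  conv_lhs => rw [this]
  rw [show (QuotientAddGroup.mk : _ → Lgrp n p) = (QuotientAddGroup.mk' (Lrel n p)) from rfl]
  rw [map_add, map_sum, map_zsmul]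
  simp only [map_zsmul]
  rfl

/-- Every element of `L` has a unique normal form `x = Σ λ_i x_i + λ c`
with `0 ≤ λ_i < p_i` and `λ ∈ ℤ`. -/
theorem normal_form_exists_unique (n : ℕ) (hn : 1 ≤ n) (p : Fin n → ℤ)
    (hp : ∀ i, 2 ≤ p i) (x : Lgrp n p) :
    ∃! lam : (Fin n → ℤ) × ℤ,
      (∀ i, 0 ≤ lam.1 i ∧ lam.1 i < p i) ∧
      x = (∑ i, lam.1 i • Lx n p i) + lam.2 • Lc n p := by
  have hppos : ∀ i, 0 < p i := fun i => lt_of_lt_of_le (by norm_num) (hp i)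
  obtain ⟨⟨a, b⟩, rfl⟩ := QuotientAddGroup.mk_surjective x
  have key : ∀ lam : (Fin n → ℤ) × ℤ,
      ((QuotientAddGroup.mk (a, b) : Lgrp n p)
        = (∑ i, lam.1 i • Lx n p i) + lam.2 • Lc n p)
      ↔ ∃ k : Fin n → ℤ, (∀ i, lam.1 i = a i - k i * p i) ∧ lam.2 = b + ∑ i, k i := by
    intro lam
    rw [← mk_eq_sum, QuotientAddGroup.eq, mem_Lrel]
    constructor
    · rintro ⟨k, hk⟩
      have h1 := congrArg Prod.fst hk
      have h2 := congrArg Prod.snd hk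
      simp only [Prod.fst_add, Prod.fst_neg, Prod.snd_add, Prod.snd_neg] at h1 h2
      refine ⟨-k, fun i => ?_, ?_⟩
      · have := congrFun h1 i
        simp only [Pi.add_apply, Pi.neg_apply] at this
        simp only [Pi.neg_apply]; linarith
      · simp only [Pi.neg_apply, Finset.sum_neg_distrib]
        linarith
    · rintro ⟨k, h1, h2⟩
      refine ⟨-k, Prod.ext (funext fun i => ?_) ?_⟩
      · show -a i + lam.1 i = -k i * p i
        have := h1 i; linarith
      · show -b + lam.2 = -∑ i, -k i
        simp only [Finset.sum_neg_distrib, neg_neg]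
        linarith
  refine ⟨⟨fun i => a i % p i, b + ∑ i, a i / p i⟩, ⟨?_, ?_⟩, ?_⟩
  · intro i
    exact ⟨Int.emod_nonneg _ (hppos i).ne', Int.emod_lt_of_pos _ (hppos i)⟩
  · rw [key]
    refine ⟨fun i => a i / p i, fun i => ?_, rfl⟩
    show a i % p i = a i - a i / p i * p i
    rw [Int.emod_def]; ring
  · rintro lam ⟨hbound, heq⟩
    obtain ⟨k, h1, h2⟩ := (key lam).mp heq
    have hk : ∀ i, k i = a i / p i := by
      intro i
      have hb := hbound i
      have : a i = lam.1 i + p i * k i := by linarith [h1 i]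
      rw [this, Int.add_mul_ediv_left _ _ (hppos i).ne',
        Int.ediv_eq_zero_of_lt hb.1 hb.2, zero_add]
    refine Prod.ext (funext fun i => ?_) ?_
    · show lam.1 i = a i % p i
      rw [h1 i, hk i, Int.emod_def]; ring
    · show lam.2 = b + ∑ i, a i / p i
      rw [h2]
      exact congrArg _ (Finset.sum_congr rfl fun i _ => hk i)
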